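/- Let J ⊆ ℝ be an interval and f : J → (0,∞) be a convex function. Then for all a, b ∈ J and all t ∈ [0,1], with R = max{t, 1−t}, one has (1−t)f(a) + t·f(b) ≤ f((1−t)a + tb) + 2R·((f(a)+f(b))/2 − f((a+b)/2)). -/

import Mathlib

/-!
For `t ≤ 1/2` the midpoint `(a + b)/2` lies on the segment between `c = (1 - t)a + tb` and `b`,
namely `(a + b)/2 = c / (2(1 - t)) + (1 - 2t) b / (2(1 - t))`, so convexity gives
`2(1 - t) f((a + b)/2) ≤ f(c) + (1 - 2t) f(b)`, which rearranges to the claim with `R = 1 - t`.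
The case `t ≥ 1/2` follows by exchanging `a` and `b`.
-/

section

variable {E : Type*} [AddCommGroup E] [Module ℝ E] {s : Set E} {f : E → ℝ} {a b : E} {t : ℝ}

theorem ConvexOn.two_mul_one_sub_mul_map_midpoint_le (hf : ConvexOn ℝ s f) (ha : a ∈ s)
    (hb : b ∈ s) (ht₀ : 0 ≤ t) (ht : t ≤ 1 / 2) :
    2 * (1 - t) * f (midpoint ℝ a b) ≤ f ((1 - t) • a + t • b) + (1 - 2 * t) * f b := by
  have ht₁ : 0 < 1 - t := by linarith
  have hc : (1 - t) • a + t • b ∈ s := hf.1 ha hb ht₁.le ht₀ (by ring)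
  have hm : (1 / (2 * (1 - t))) • ((1 - t) • a + t • b) + ((1 - 2 * t) / (2 * (1 - t))) • b =
      midpoint ℝ a b := by
    rw [midpoint_eq_smul_add, invOf_eq_inv]
    match_scalars
    · field_simp
    · field_simp; ring
  have key := hf.2 hc hb (by positivity : (0 : ℝ) ≤ 1 / (2 * (1 - t)))
    (div_nonneg (by linarith) (by linarith) : (0 : ℝ) ≤ (1 - 2 * t) / (2 * (1 - t)))
    (by field_simp; ring)
  rw [hm, smul_eq_mul, smul_eq_mul] at key
  calc 2 * (1 - t) * f (midpoint ℝ a b)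
      ≤ 2 * (1 - t) * (1 / (2 * (1 - t)) * f ((1 - t) • a + t • b) +
          (1 - 2 * t) / (2 * (1 - t)) * f b) := by gcongr
    _ = f ((1 - t) • a + t • b) + (1 - 2 * t) * f b := by field_simp

theorem ConvexOn.combo_le_map_combo_add_midpoint_gap (hf : ConvexOn ℝ s f) (ha : a ∈ s)
    (hb : b ∈ s) (ht₀ : 0 ≤ t) (ht : t ≤ 1 / 2) :
    (1 - t) * f a + t * f b ≤
      f ((1 - t) • a + t • b) + 2 * (1 - t) * ((f a + f b) / 2 - f (midpoint ℝ a b)) := by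
  linarith [hf.two_mul_one_sub_mul_map_midpoint_le ha hb ht₀ ht]

end

theorem stmt1 (J : Set ℝ) (f : ℝ → ℝ)
    (hf : ConvexOn ℝ J f)
    (a b : ℝ) (ha : a ∈ J) (hb : b ∈ J)
    (t : ℝ) (ht : t ∈ Set.Icc (0 : ℝ) 1) (R : ℝ) (hR : R = max t (1 - t)) :
    (1 - t) * f a + t * f b ≤
      f ((1 - t) * a + t * b) + 2 * R * ((f a + f b) / 2 - f ((a + b) / 2)) := by
  obtain ⟨ht₀, ht₁⟩ := ht
  have hmid : (a + b) / 2 = midpoint ℝ a b := by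
    rw [midpoint_eq_smul_add, invOf_eq_inv, smul_eq_mul]; ring
  rw [hmid]
  rcases le_or_gt t (1 / 2) with h | h
  · rw [hR, max_eq_right (by linarith)]
    simpa using hf.combo_le_map_combo_add_midpoint_gap ha hb ht₀ h
  · have := hf.combo_le_map_combo_add_midpoint_gap hb ha (t := 1 - t) (by linarith) (by linarith)
    rw [hR, max_eq_left (by linarith), midpoint_comm]
    simp only [sub_sub_cancel, smul_eq_mul] at this
    rwa [add_comm (t * b), add_comm (t * f b), add_comm (f b)] at this
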